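/- arXiv:quant-ph/0409095 — 3 statements merged into one kernel-verified Lean document; each statement's English description precedes it below -/
import Mathlib

section
/- Let L be the n×n real symmetric matrix with 1 on the diagonal and constant η ≥ 1 off the diagonal. Then the induced 2-norm-to-operator-norm of the map X ↦ L ∘ X on Hermitian matrices equals √((η²(n−1) + 1)/n). -/
open scoped InnerProductSpace

lemma selfadjoint_opNorm_le {E : Type*} [NormedAddCommGroup E] [InnerProductSpace ℂ E]
    (T : E →L[ℂ] E) (hT : ∀ x y : E, ⟪T x, y⟫_ℂ = ⟪x, T y⟫_ℂ)
    {C : ℝ} (hC : 0 ≤ C) (h : ∀ x : E, ‖(⟪T x, x⟫_ℂ)‖ ≤ C * ‖x‖ ^ 2) : ‖T‖ ≤ C := by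
  refine T.opNorm_le_bound hC fun x => ?_
  rcases eq_or_ne (T x) 0 with h0 | h0
  · simp only [h0, norm_zero]
    positivity
  have hx : x ≠ 0 := by rintro rfl; simp at h0
  set y : E := ((‖x‖ : ℂ) / (‖T x‖ : ℂ)) • T x with hy_def
  have hTx : (0:ℝ) < ‖T x‖ := norm_pos_iff.2 h0
  have hy : ‖y‖ = ‖x‖ := by
    rw [hy_def, norm_smul]
    rw [norm_div]
    simp [div_mul_cancel₀, ne_of_gt hTx]
  have key0 : ⟪T x, y⟫_ℂ = ((‖x‖ * ‖T x‖ : ℝ) : ℂ) := by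
    rw [hy_def, inner_smul_right, inner_self_eq_norm_sq_to_K (𝕜 := ℂ)]
    have hne : (‖T x‖ : ℂ) ≠ 0 := by exact_mod_cast ne_of_gt hTx
    push_cast
    field_simp
    rfl
  have key : ‖x‖ * ‖T x‖ = Complex.re ⟪T x, y⟫_ℂ := by
    rw [key0, Complex.ofReal_re]
  -- polarization
  have e1 : ⟪T (x+y), x+y⟫_ℂ = ⟪T x, x⟫_ℂ + ⟪T x, y⟫_ℂ + ⟪T y, x⟫_ℂ + ⟪T y, y⟫_ℂ := by
    rw [map_add, inner_add_left, inner_add_right, inner_add_right]; ring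
  have e2 : ⟪T (x-y), x-y⟫_ℂ = ⟪T x, x⟫_ℂ - ⟪T x, y⟫_ℂ - ⟪T y, x⟫_ℂ + ⟪T y, y⟫_ℂ := by
    rw [map_sub, inner_sub_left, inner_sub_right, inner_sub_right]; ring
  have hsymm : Complex.re ⟪T y, x⟫_ℂ = Complex.re ⟪T x, y⟫_ℂ := by
    rw [hT y x, ← inner_conj_symm y (T x)]
    exact Complex.conj_re _
  have hb1 : Complex.re ⟪T (x+y), x+y⟫_ℂ ≤ C * ‖x+y‖ ^ 2 :=
    (Complex.re_le_norm _).trans (by exact h _)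
  have hb2 : -(C * ‖x-y‖ ^ 2) ≤ Complex.re ⟪T (x-y), x-y⟫_ℂ := by
    have h2 : |Complex.re ⟪T (x-y), x-y⟫_ℂ| ≤ C * ‖x-y‖ ^ 2 :=
      (Complex.abs_re_le_norm _).trans (by exact h (x-y))
    linarith [(abs_le.1 h2).1]
  have hpar : ‖x+y‖ ^ 2 + ‖x-y‖ ^ 2 = 2 * (‖x‖ ^ 2 + ‖y‖ ^ 2) := by
    have := parallelogram_law_with_norm ℂ x y
    nlinarith [this]
  have e1' := congrArg Complex.re e1
  have e2' := congrArg Complex.re e2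
  simp only [Complex.add_re, Complex.sub_re] at e1' e2'
  have h4 : 4 * (‖x‖ * ‖T x‖) ≤ C * (‖x+y‖^2 + ‖x-y‖^2) := by
    rw [key]
    nlinarith [hb1, hb2, e1', e2', hsymm]
  rw [hpar, hy] at h4
  have hx' : (0:ℝ) < ‖x‖ := norm_pos_iff.2 hx
  nlinarith [h4]

lemma sum_ite_const {R : Type*} [CommRing R] {n : ℕ} (i : Fin n) (a b : R) :
    ∑ j, (if i = j then a else b) = (n : R) * b + (a - b) := by
  have h : ∀ j, (if i = j then a else b) = b + (if i = j then a - b else 0) :=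
    fun j => by split <;> ring
  simp_rw [h, Finset.sum_add_distrib, Finset.sum_const, Finset.sum_ite_eq,
    Finset.card_univ, Fintype.card_fin, Finset.mem_univ, if_true, nsmul_eq_mul]


/-- The operator norm (largest singular value) of a square matrix. -/
noncomputable def opNorm {𝕜 : Type*} [RCLike 𝕜] {n : Type*} [Fintype n] [DecidableEq n]
    (A : Matrix n n 𝕜) : ℝ := ‖Matrix.toEuclideanCLM (𝕜 := 𝕜) A‖

/-- The Frobenius (2-)norm of a matrix. -/
noncomputable def frobNorm {𝕜 : Type*} [RCLike 𝕜] {m n : Type*} [Fintype m] [Fintype n]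
    (A : Matrix m n 𝕜) : ℝ := Real.sqrt (∑ i, ∑ j, ‖A i j‖ ^ 2)

lemma upper_bound {n : ℕ} (hn : 0 < n) (η : ℝ) (hη : 1 ≤ η)
    (X : Matrix (Fin n) (Fin n) ℂ) (hX : X.IsHermitian)
    (hXf : ∑ i, ∑ j, ‖X i j‖ ^ 2 = 1) :
    opNorm (Matrix.hadamard (Matrix.of fun i j => if i = j then (1 : ℂ) else (η : ℂ)) X)
      ≤ Real.sqrt ((η ^ 2 * ((n : ℝ) - 1) + 1) / n) := by
  have hn1 : (1 : ℝ) ≤ (n : ℝ) := by exact_mod_cast hn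
  have hη0 : (0:ℝ) ≤ η := by linarith
  set lam : ℝ := η ^ 2 * ((n : ℝ) - 1) + 1 with hlam_def
  have hlam : 0 < lam := by nlinarith
  set L : Matrix (Fin n) (Fin n) ℂ :=
    Matrix.of fun i j => if i = j then (1 : ℂ) else (η : ℂ) with hL_def
  set A : Matrix (Fin n) (Fin n) ℂ := Matrix.hadamard L X with hA_def
  have hLij : ∀ i j, L i j = if i = j then (1 : ℂ) else (η : ℂ) := fun i j => rfl
  have hLnorm : ∀ i j, ‖L i j‖ = if i = j then (1:ℝ) else η := by
    intro i j
    rw [hLij]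
    split
    · simp
    · rw [Complex.norm_real, Real.norm_eq_abs, abs_of_nonneg hη0]
  have hLsymm : ∀ i j, L i j = L j i := by
    intro i j
    rw [hLij, hLij]
    by_cases hij : i = j
    · simp [hij]
    · rw [if_neg hij, if_neg (fun h => hij h.symm)]
  have hLreal : ∀ i j, (starRingEnd ℂ) (L i j) = L i j := by
    intro i j
    rw [hLij]
    split
    · simp
    · exact Complex.conj_ofReal η
  have hstarL : ∀ i j, star (L j i) = L i j := fun i j => by
    rw [hLsymm j i]; exact hLreal i j
  have hA : A.IsHermitian := by
    ext i j
    have hx := congrFun (congrFun hX i) j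
    simp only [Matrix.conjTranspose_apply] at hx ⊢
    simp only [hA_def, Matrix.hadamard_apply, star_mul']
    rw [hstarL i j, hx]
  have hC : (0 : ℝ) ≤ Real.sqrt (lam / n) := Real.sqrt_nonneg _
  show ‖Matrix.toEuclideanCLM (𝕜 := ℂ) A‖ ≤ _
  set T := Matrix.toEuclideanCLM (𝕜 := ℂ) A with hT_def
  have hsym : ∀ x y : EuclideanSpace ℂ (Fin n), ⟪T x, y⟫_ℂ = ⟪x, T y⟫_ℂ := by
    have := Matrix.isHermitian_iff_isSymmetric.1 hA
    exact fun x y => this x y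
  refine selfadjoint_opNorm_le T hsym hC fun x => ?_
  have hTx : ∀ i, T x i = ∑ j, A i j * x j := fun i => rfl
  set a : Fin n → ℝ := fun i => ‖x i‖ ^ 2 with ha_def
  have hx2 : ‖x‖ ^ 2 = ∑ i, a i := by
    rw [EuclideanSpace.norm_eq, Real.sq_sqrt (by positivity)]
  have h1 : ‖(⟪T x, x⟫_ℂ)‖ ≤ ∑ i, ∑ j, ‖A i j‖ * (‖x i‖ * ‖x j‖) := by
    have he : (⟪T x, x⟫_ℂ) = ∑ i, ∑ j, (starRingEnd ℂ) (A i j * x j) * x i := by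
      simp only [PiLp.inner_apply, RCLike.inner_apply, hTx, map_sum, Finset.sum_mul]
      exact Finset.sum_congr rfl fun i _ => by
        rw [Finset.mul_sum]; exact Finset.sum_congr rfl fun j _ => mul_comm _ _
    rw [he]
    refine (norm_sum_le _ _).trans (Finset.sum_le_sum fun i _ =>
      (norm_sum_le _ _).trans (Finset.sum_le_sum fun j _ => le_of_eq ?_))
    rw [norm_mul, RCLike.norm_conj, norm_mul]
    ring
  set F : Fin n × Fin n → ℝ := fun p => ‖L p.1 p.2‖ * (‖x p.1‖ * ‖x p.2‖) with hF_def
  set G : Fin n × Fin n → ℝ := fun p => ‖X p.1 p.2‖ with hG_def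
  have h2 : ∑ i, ∑ j, ‖A i j‖ * (‖x i‖ * ‖x j‖) = ∑ p : Fin n × Fin n, F p * G p := by
    rw [Fintype.sum_prod_type]
    refine Finset.sum_congr rfl fun i _ => Finset.sum_congr rfl fun j _ => ?_
    simp only [hA_def, Matrix.hadamard_apply, norm_mul, hF_def, hG_def]
    ring
  have hG2 : ∑ p : Fin n × Fin n, G p ^ 2 = 1 := by
    rw [Fintype.sum_prod_type]; exact hXf
  have hFcalc : ∑ p : Fin n × Fin n, F p ^ 2
      = η ^ 2 * (∑ i, a i) ^ 2 - (η ^ 2 - 1) * ∑ i, (a i) ^ 2 := by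
    rw [Fintype.sum_prod_type]
    have hrow : ∀ i, ∑ j, F (i, j) ^ 2
        = η ^ 2 * (a i * ∑ j, a j) - (η ^ 2 - 1) * (a i) ^ 2 := by
      intro i
      have hterm : ∀ j, F (i, j) ^ 2
          = η ^ 2 * (a i * a j) - (η ^ 2 - 1) * (if i = j then a i * a j else 0) := by
        intro j
        simp only [hF_def, mul_pow, hLnorm, ha_def]
        by_cases hij : i = j
        · subst hij; simp; ring
        · simp only [if_neg hij]; ring
      simp_rw [hterm, Finset.sum_sub_distrib, ← Finset.mul_sum, Finset.sum_ite_eq,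
        Finset.mem_univ, if_true]
      ring
    simp_rw [hrow, Finset.sum_sub_distrib, ← Finset.mul_sum, ← Finset.sum_mul]
    ring
  have hsum_sq : (∑ i, a i) ^ 2 ≤ (n : ℝ) * ∑ i, (a i) ^ 2 := by
    have := sq_sum_le_card_mul_sum_sq (s := (Finset.univ : Finset (Fin n))) (f := a)
    simpa using this
  have hF2 : ∑ p : Fin n × Fin n, F p ^ 2 ≤ lam / n * (∑ i, a i) ^ 2 := by
    rw [hFcalc, hlam_def]
    rw [div_mul_eq_mul_div, le_div_iff₀ (by linarith)]
    have hη2 : (1:ℝ) ≤ η ^ 2 := by nlinarith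
    nlinarith [mul_le_mul_of_nonneg_left hsum_sq (by linarith : (0:ℝ) ≤ η ^ 2 - 1)]
  have hFG : ∑ p : Fin n × Fin n, F p * G p
      ≤ Real.sqrt (lam / n) * (∑ i, a i) := by
    have hnn : (0:ℝ) ≤ ∑ p : Fin n × Fin n, F p * G p :=
      Finset.sum_nonneg fun p _ => mul_nonneg (by positivity) (norm_nonneg _)
    have hcs := Finset.sum_mul_sq_le_sq_mul_sq Finset.univ F G
    have h3 : (∑ p : Fin n × Fin n, F p * G p) ^ 2 ≤ lam / n * (∑ i, a i) ^ 2 := by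
      calc (∑ p : Fin n × Fin n, F p * G p) ^ 2
          ≤ (∑ p : Fin n × Fin n, F p ^ 2) * ∑ p : Fin n × Fin n, G p ^ 2 := hcs
        _ = ∑ p : Fin n × Fin n, F p ^ 2 := by rw [hG2, mul_one]
        _ ≤ lam / n * (∑ i, a i) ^ 2 := hF2
    calc ∑ p : Fin n × Fin n, F p * G p
        = Real.sqrt ((∑ p : Fin n × Fin n, F p * G p) ^ 2) := (Real.sqrt_sq hnn).symm
      _ ≤ Real.sqrt (lam / n * (∑ i, a i) ^ 2) := Real.sqrt_le_sqrt h3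
      _ = Real.sqrt (lam / n) * (∑ i, a i) := by
          rw [Real.sqrt_mul (by positivity), Real.sqrt_sq
            (Finset.sum_nonneg fun i _ => by positivity)]
  rw [hx2]
  calc ‖(⟪T x, x⟫_ℂ)‖ ≤ ∑ i, ∑ j, ‖A i j‖ * (‖x i‖ * ‖x j‖) := h1
    _ = ∑ p : Fin n × Fin n, F p * G p := h2
    _ ≤ Real.sqrt (lam / n) * (∑ i, a i) := hFG

/-- For the matrix `L` with `1` on the diagonal and `η ≥ 1` off the diagonal, the
`2`-to-`∞` induced norm of `X ↦ L ∘ X` on Hermitian matrices is `√((η²(n-1)+1)/n)`. -/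
theorem schur_map_norm_of_const_offdiag {n : ℕ} (hn : 0 < n) (η : ℝ) (hη : 1 ≤ η) :
    (⨆ X : {X : Matrix (Fin n) (Fin n) ℂ // X.IsHermitian ∧ frobNorm X = 1},
        opNorm (Matrix.hadamard
          (Matrix.of fun i j => if i = j then (1 : ℂ) else (η : ℂ)) X.1)) =
      Real.sqrt ((η ^ 2 * ((n : ℝ) - 1) + 1) / n) := by
  have hn1 : (1 : ℝ) ≤ (n : ℝ) := by exact_mod_cast hn
  have hη0 : (0:ℝ) ≤ η := by linarith
  have hnpos : (0:ℝ) < n := by linarith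
  set lam : ℝ := η ^ 2 * ((n : ℝ) - 1) + 1 with hlam_def
  have hlam : 0 < lam := by nlinarith
  set c : ℝ := (Real.sqrt ((n : ℝ) * lam))⁻¹ with hc_def
  have hsq : 0 < Real.sqrt ((n : ℝ) * lam) := Real.sqrt_pos.2 (by positivity)
  have hc0 : 0 < c := inv_pos.2 hsq
  have hsqsq : (Real.sqrt ((n : ℝ) * lam)) ^ 2 = (n : ℝ) * lam :=
    Real.sq_sqrt (by positivity)
  have hc2 : c ^ 2 * ((n : ℝ) * lam) = 1 := by
    rw [hc_def, inv_pow, hsqsq, inv_mul_cancel₀ (by positivity)]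
  set L : Matrix (Fin n) (Fin n) ℂ :=
    Matrix.of fun i j => if i = j then (1 : ℂ) else (η : ℂ) with hL_def
  have hLij : ∀ i j, L i j = if i = j then (1 : ℂ) else (η : ℂ) := fun i j => rfl
  set Xs : Matrix (Fin n) (Fin n) ℂ :=
    Matrix.of fun i j => if i = j then ((c : ℝ) : ℂ) else ((c * η : ℝ) : ℂ) with hXs_def
  have hXsij : ∀ i j, Xs i j = if i = j then ((c : ℝ) : ℂ) else ((c * η : ℝ) : ℂ) :=
    fun i j => rfl
  have hXsherm : Xs.IsHermitian := by
    ext i j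
    simp only [Matrix.conjTranspose_apply, hXsij]
    by_cases hij : i = j
    · subst hij; simp
    · rw [if_neg (fun h => hij h.symm), if_neg hij]
      exact Complex.conj_ofReal _
  have hXsfrob_sum : ∑ i, ∑ j, ‖Xs i j‖ ^ 2 = 1 := by
    have hentry : ∀ i j, ‖Xs i j‖ ^ 2 = if i = j then c ^ 2 else (c * η) ^ 2 := by
      intro i j; rw [hXsij]
      split <;> rw [Complex.norm_real, Real.norm_eq_abs, sq_abs]
    simp_rw [hentry, sum_ite_const, Finset.sum_const, Finset.card_univ,
      Fintype.card_fin, nsmul_eq_mul]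
    rw [hlam_def] at hc2
    linear_combination hc2
  have hXsfrob : frobNorm Xs = 1 := by rw [frobNorm, hXsfrob_sum, Real.sqrt_one]
  have hclam : c * lam = Real.sqrt (lam / n) := by
    have h1 : Real.sqrt (lam / n) * Real.sqrt ((n : ℝ) * lam) = lam := by
      rw [← Real.sqrt_mul (by positivity),
        show lam / n * ((n : ℝ) * lam) = lam ^ 2 by field_simp,
        Real.sqrt_sq hlam.le]
    rw [hc_def, inv_mul_eq_div, div_eq_iff (ne_of_gt hsq)]
    linarith [h1]
  set A : Matrix (Fin n) (Fin n) ℂ := Matrix.hadamard L Xs with hA_def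
  have hAij : ∀ i j, A i j = if i = j then ((c : ℝ) : ℂ) else ((η ^ 2 * c : ℝ) : ℂ) := by
    intro i j
    rw [hA_def, Matrix.hadamard_apply, hLij, hXsij]
    by_cases hij : i = j
    · simp [hij]
    · simp only [if_neg hij]; push_cast; ring
  have hmul : ∀ i, ∑ j, A i j = ((c * lam : ℝ) : ℂ) := by
    intro i
    simp_rw [hAij, sum_ite_const]
    rw [hlam_def]; push_cast; ring
  set u : EuclideanSpace ℂ (Fin n) := (WithLp.equiv 2 (Fin n → ℂ)).symm (fun _ => 1)
    with hu_def
  set T := Matrix.toEuclideanCLM (𝕜 := ℂ) A with hT_def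
  have hTu : ∀ i, T u i = ((c * lam : ℝ) : ℂ) := by
    intro i
    have h0 : T u i = ∑ j, A i j * u j := rfl
    have h1 : ∀ j, u j = 1 := fun j => rfl
    simp_rw [h0, h1, mul_one]
    exact hmul i
  have hu_norm : ‖u‖ = Real.sqrt n := by
    rw [EuclideanSpace.norm_eq]
    have : ∀ i : Fin n, ‖u i‖ = 1 := fun i => by rw [show u i = 1 from rfl, norm_one]
    simp [this]
  have hTu_norm : ‖T u‖ = (c * lam) * Real.sqrt n := by
    rw [EuclideanSpace.norm_eq]
    simp_rw [hTu]
    rw [Finset.sum_const, Finset.card_univ, Fintype.card_fin, nsmul_eq_mul]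
    rw [Complex.norm_real, Real.norm_eq_abs, sq_abs,
      show (n : ℝ) * (c * lam) ^ 2 = ((c * lam) * Real.sqrt n) ^ 2 by
        rw [mul_pow (c * lam), Real.sq_sqrt hnpos.le]; ring]
    exact Real.sqrt_sq (by positivity)
  have hlow : Real.sqrt (lam / n) ≤ opNorm A := by
    have hle := T.le_opNorm u
    rw [hTu_norm, hu_norm] at hle
    have hsn : 0 < Real.sqrt n := Real.sqrt_pos.2 hnpos
    rw [← hclam]
    exact le_of_mul_le_mul_right hle hsn
  haveI hne : Nonempty {X : Matrix (Fin n) (Fin n) ℂ // X.IsHermitian ∧ frobNorm X = 1} :=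
    ⟨⟨Xs, hXsherm, hXsfrob⟩⟩
  have hbdd : BddAbove (Set.range fun X :
      {X : Matrix (Fin n) (Fin n) ℂ // X.IsHermitian ∧ frobNorm X = 1} =>
      opNorm (Matrix.hadamard L X.1)) := by
    refine ⟨Real.sqrt (lam / n), ?_⟩
    rintro r ⟨⟨X, hXh, hXf⟩, rfl⟩
    exact upper_bound hn η hη X hXh (by rwa [frobNorm, Real.sqrt_eq_one] at hXf)
  apply le_antisymm
  · exact ciSup_le fun ⟨X, hXh, hXf⟩ =>
      upper_bound hn η hη X hXh (by rwa [frobNorm, Real.sqrt_eq_one] at hXf)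
  · exact le_trans hlow (le_ciSup hbdd ⟨Xs, hXsherm, hXsfrob⟩)
end

section
/- A doubly stochastic completely positive Schur-product map does not increase disorder: if B is PSD Hermitian with ones on its diagonal, then for every Hermitian H, the eigenvalues of B ∘ H are majorized by the eigenvalues of H. -/
open scoped ComplexOrder

/-- The sum of the `k` largest entries of `u` (the largest sum over subsets of size `k`). -/
noncomputable def topSum {α : Type*} [Fintype α] [DecidableEq α] (u : α → ℝ) (k : ℕ) : ℝ :=
  sSup {t : ℝ | ∃ s : Finset α, s.card = k ∧ t = ∑ i ∈ s, u i}

open Matrix Finset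

section Aux

lemma hadamard_posSemidef {n : ℕ} {A B : Matrix (Fin n) (Fin n) ℂ}
    (hA : A.PosSemidef) (hB : B.PosSemidef) : (Matrix.hadamard A B).PosSemidef := by
  exact hA.hadamard hB

lemma topSum_set_eq {α : Type*} [Fintype α] [DecidableEq α] (u : α → ℝ) (k : ℕ) :
    {t : ℝ | ∃ s : Finset α, s.card = k ∧ t = ∑ i ∈ s, u i}
      = ((Finset.univ.powersetCard k).image (fun s => ∑ i ∈ s, u i) : Finset ℝ) := by
  ext t
  simp only [Set.mem_setOf_eq, coe_image, Set.mem_image, mem_coe, mem_powersetCard]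
  constructor
  · rintro ⟨s, hs, rfl⟩; exact ⟨s, ⟨s.subset_univ, hs⟩, rfl⟩
  · rintro ⟨s, ⟨-, hs⟩, rfl⟩; exact ⟨s, hs, rfl⟩

lemma le_topSum {α : Type*} [Fintype α] [DecidableEq α] (u : α → ℝ) {k : ℕ}
    (s : Finset α) (hs : s.card = k) : ∑ i ∈ s, u i ≤ topSum u k := by
  rw [topSum, topSum_set_eq]
  exact le_csSup (Finset.bddAbove _)
    (by simp only [coe_image, Set.mem_image, mem_coe, mem_powersetCard];
        exact ⟨s, ⟨s.subset_univ, hs⟩, rfl⟩)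

lemma topSum_le {α : Type*} [Fintype α] [DecidableEq α] (u : α → ℝ) {k : ℕ}
    (hk : k ≤ Fintype.card α) {c : ℝ}
    (h : ∀ s : Finset α, s.card = k → ∑ i ∈ s, u i ≤ c) : topSum u k ≤ c := by
  obtain ⟨s0, -, hs0⟩ := Finset.exists_subset_card_eq
    (le_trans hk (le_of_eq (Finset.card_univ).symm)) (s := (Finset.univ : Finset α))
  refine csSup_le ⟨_, ⟨s0, hs0, rfl⟩⟩ ?_
  rintro t ⟨s, hs, rfl⟩
  exact h s hs

lemma weighted_le_topSum {n k : ℕ} (hk : k ≤ n) (lam d : Fin n → ℝ)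
    (hd0 : ∀ i, 0 ≤ d i) (hd1 : ∀ i, d i ≤ 1) (hsum : ∑ i, d i = (k : ℝ)) :
    ∑ i, d i * lam i ≤ topSum lam k := by
  obtain ⟨s0, -, hs0⟩ := Finset.exists_subset_card_eq
    (le_trans hk (le_of_eq (Fintype.card_fin n).symm)) (s := (Finset.univ : Finset (Fin n)))
  obtain ⟨s, hsmem, hsmax⟩ := Finset.exists_max_image (Finset.univ.powersetCard k)
    (fun s => ∑ i ∈ s, lam i) ⟨s0, by simp [hs0]⟩
  rw [mem_powersetCard] at hsmem
  obtain ⟨-, hscard⟩ := hsmem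
  have hmax : ∀ t : Finset (Fin n), t.card = k → ∑ i ∈ t, lam i ≤ ∑ i ∈ s, lam i := by
    intro t ht
    exact hsmax t (by rw [mem_powersetCard]; exact ⟨t.subset_univ, ht⟩)
  have hfinal : ∑ i, d i * lam i ≤ ∑ i ∈ s, lam i := by
    by_cases hs : s = Finset.univ
    · have hkn : (k : ℝ) = n := by
        rw [← hscard, hs, Finset.card_univ, Fintype.card_fin]
      have hzero : ∑ i, (1 - d i) = 0 := by
        rw [Finset.sum_sub_distrib, hsum]
        simp [hkn]
      have hone : ∀ i, d i = 1 := by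
        intro i
        have := (Finset.sum_eq_zero_iff_of_nonneg
          (fun i _ => by linarith [hd1 i])).mp hzero i (mem_univ i)
        linarith
      rw [hs]
      exact Finset.sum_le_sum fun i _ => by rw [hone i]; ring_nf; exact le_refl _
    · have hcne : (sᶜ : Finset (Fin n)).Nonempty := by
        refine Finset.nonempty_iff_ne_empty.mpr fun h => hs ?_
        have := congrArg (fun t => tᶜ) h
        simpa using this
      set θ := (sᶜ : Finset (Fin n)).sup' hcne lam with hθ
      obtain ⟨j0, hj0mem, hj0⟩ := Finset.exists_mem_eq_sup' hcne lam
      have hj0s : j0 ∉ s := Finset.mem_compl.mp hj0mem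
      have hlow : ∀ i ∈ s, θ ≤ lam i := by
        intro i hi
        have hj0e : j0 ∉ s.erase i := fun h => hj0s (Finset.mem_of_mem_erase h)
        have hcard : (insert j0 (s.erase i)).card = k := by
          rw [Finset.card_insert_of_notMem hj0e, Finset.card_erase_of_mem hi, hscard]
          have : 1 ≤ k := by rw [← hscard]; exact Finset.card_pos.mpr ⟨i, hi⟩
          omega
        have := hmax _ hcard
        rw [Finset.sum_insert hj0e, Finset.sum_erase_eq_sub hi] at this
        rw [hθ, hj0]
        linarith
      have hhigh : ∀ i, i ∉ s → lam i ≤ θ := fun i hi =>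
        Finset.le_sup' lam (Finset.mem_compl.mpr hi)
      calc ∑ i, d i * lam i
          ≤ ∑ i, ((if i ∈ s then lam i - θ else 0) + d i * θ) := by
            refine Finset.sum_le_sum fun i _ => ?_
            by_cases h : i ∈ s
            · simp only [h, if_pos]
              nlinarith [mul_nonneg (by linarith [hd1 i] : (0:ℝ) ≤ 1 - d i)
                (by linarith [hlow i h] : (0:ℝ) ≤ lam i - θ)]
            · simp only [h, if_neg, not_false_iff, zero_add]
              exact mul_le_mul_of_nonneg_left (hhigh i h) (hd0 i)
        _ = ∑ i ∈ s, (lam i - θ) + (∑ i, d i) * θ := by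
            rw [Finset.sum_add_distrib, Finset.sum_ite_mem, Finset.univ_inter,
              Finset.sum_mul]
        _ = ∑ i ∈ s, lam i := by
            rw [Finset.sum_sub_distrib, Finset.sum_const, hscard, hsum]
            ring
  exact le_trans hfinal (le_topSum lam s hscard)

lemma trace_eq_sum_eigenvalues {n : ℕ} {M : Matrix (Fin n) (Fin n) ℂ}
    (hM : M.IsHermitian) : M.trace = ∑ i, (hM.eigenvalues i : ℂ) := by
  conv_lhs => rw [hM.spectral_theorem, Unitary.conjStarAlgAut_apply]
  rw [Matrix.trace_mul_cycle]
  rw [show (star (hM.eigenvectorUnitary : Matrix (Fin n) (Fin n) ℂ))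
      * (hM.eigenvectorUnitary : Matrix (Fin n) (Fin n) ℂ) = 1 from
    Matrix.mem_unitaryGroup_iff'.mp hM.eigenvectorUnitary.2, one_mul,
    Matrix.trace_diagonal]
  rfl

lemma psd_diag_re_nonneg {n : ℕ} {P : Matrix (Fin n) (Fin n) ℂ}
    (hP : P.PosSemidef) (i : Fin n) : 0 ≤ (P i i).re ∧ (P i i).im = 0 := by
  have h := hP.dotProduct_mulVec_nonneg (Pi.single i 1)
  rw [Complex.nonneg_iff] at h
  have he : star (Pi.single i 1) ⬝ᵥ P *ᵥ Pi.single i (1:ℂ) = P i i := by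
    simp [dotProduct, mulVec, Pi.single_apply]
  rw [he] at h
  exact ⟨h.1, h.2.symm⟩

/-- Ky Fan type bound: if `0 ≤ P ≤ 1` and `tr P = k` then `Re tr (H P)` is at most the sum of
the `k` largest eigenvalues of `H`. -/
lemma kyFan {n k : ℕ} (hk : k ≤ n) {H : Matrix (Fin n) (Fin n) ℂ}
    (hH : H.IsHermitian) (P : Matrix (Fin n) (Fin n) ℂ) (hP : P.PosSemidef)
    (hP1 : ((1 : Matrix (Fin n) (Fin n) ℂ) - P).PosSemidef)
    (htr : P.trace = (k : ℂ)) :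
    ((H * P).trace).re ≤ topSum hH.eigenvalues k := by
  set U : Matrix (Fin n) (Fin n) ℂ := (hH.eigenvectorUnitary : Matrix (Fin n) (Fin n) ℂ) with hU
  have hU1 : star U * U = 1 := Matrix.mem_unitaryGroup_iff'.mp hH.eigenvectorUnitary.2
  have hU2 : U * star U = 1 := Matrix.mem_unitaryGroup_iff.mp hH.eigenvectorUnitary.2
  set Q : Matrix (Fin n) (Fin n) ℂ := star U * P * U with hQdef
  have hQpsd : Q.PosSemidef := by
    have := hP.conjTranspose_mul_mul_same U
    rwa [← Matrix.star_eq_conjTranspose] at this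
  have hQ1psd : ((1 : Matrix (Fin n) (Fin n) ℂ) - Q).PosSemidef := by
    have := hP1.conjTranspose_mul_mul_same U
    rw [← Matrix.star_eq_conjTranspose] at this
    have heq : star U * (1 - P) * U = 1 - Q := by
      rw [Matrix.mul_sub, Matrix.sub_mul, Matrix.mul_one, hU1, hQdef]
    rwa [heq] at this
  set d : Fin n → ℝ := fun i => (Q i i).re with hd
  have hd0 : ∀ i, 0 ≤ d i := fun i => (psd_diag_re_nonneg hQpsd i).1
  have hd1 : ∀ i, d i ≤ 1 := by
    intro i
    have := (psd_diag_re_nonneg hQ1psd i).1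
    have h1 : ((1 : Matrix (Fin n) (Fin n) ℂ) - Q) i i = 1 - Q i i := by
      simp [Matrix.sub_apply, Matrix.one_apply]
    rw [h1] at this
    simp only [Complex.sub_re, Complex.one_re] at this
    linarith
  have hsumd : ∑ i, d i = (k : ℝ) := by
    have h1 : Q.trace = P.trace := by
      rw [hQdef, Matrix.trace_mul_cycle, hU2, Matrix.one_mul]
    have h2 : Q.trace = (k : ℂ) := h1.trans htr
    have h3 := congrArg Complex.re h2
    rw [Matrix.trace, Complex.re_sum] at h3
    simpa [Matrix.diag] using h3
  have hUU : ∀ X : Matrix (Fin n) (Fin n) ℂ, U * (star U * X) = X := fun X => by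
    rw [← Matrix.mul_assoc, hU2, Matrix.one_mul]
  have hHP : ((H * P).trace).re = ∑ i, d i * hH.eigenvalues i := by
    have hDQ : Matrix.diagonal (RCLike.ofReal ∘ hH.eigenvalues) * Q
        = star U * (H * P) * U := by
      rw [← hH.conjStarAlgAut_star_eigenvectorUnitary, Unitary.conjStarAlgAut_apply,
        Unitary.coe_star, star_star, ← hU, hQdef]
      simp only [Matrix.mul_assoc, hUU]
    have h1 : (H * P).trace
        = (Matrix.diagonal (RCLike.ofReal ∘ hH.eigenvalues) * Q).trace := by
      rw [hDQ, Matrix.trace_mul_cycle, hU2, Matrix.one_mul]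
    rw [h1, Matrix.trace, Complex.re_sum]
    refine Finset.sum_congr rfl fun i _ => ?_
    simp only [Matrix.diag, Matrix.diagonal_mul, Function.comp_apply]
    simp [Complex.mul_re, mul_comm, hd]
  rw [hHP]
  exact weighted_le_topSum hk hH.eigenvalues d hd0 hd1 hsumd

end Aux

/-- If `B` is PSD with unit diagonal, then for every Hermitian `H` the eigenvalues of the
Schur product `B ∘ H` are majorized by the eigenvalues of `H`. -/
theorem schur_product_eigenvalues_majorized {n : ℕ}
    (B : Matrix (Fin n) (Fin n) ℂ) (hB : B.PosSemidef) (hdiag : ∀ i, B i i = 1)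
    (H : Matrix (Fin n) (Fin n) ℂ) (hH : H.IsHermitian)
    (hBH : (Matrix.hadamard B H).IsHermitian) :
    (∀ k : ℕ, topSum hBH.eigenvalues k ≤ topSum hH.eigenvalues k) ∧
    ∑ i, hBH.eigenvalues i = ∑ i, hH.eigenvalues i := by
  constructor
  · intro k
    by_cases hk : k ≤ n
    · refine topSum_le hBH.eigenvalues (by simpa [Fintype.card_fin] using hk) ?_
      intro S hS
      -- spectral data of B ⊙ H
      set U : Matrix (Fin n) (Fin n) ℂ :=
        (hBH.eigenvectorUnitary : Matrix (Fin n) (Fin n) ℂ) with hU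
      have hU1 : star U * U = 1 := Matrix.mem_unitaryGroup_iff'.mp hBH.eigenvectorUnitary.2
      have hU2 : U * star U = 1 := Matrix.mem_unitaryGroup_iff.mp hBH.eigenvectorUnitary.2
      have hUU : ∀ X : Matrix (Fin n) (Fin n) ℂ, U * (star U * X) = X := fun X => by
        rw [← Matrix.mul_assoc, hU2, Matrix.one_mul]
      set ind : Fin n → ℂ := fun j => if j ∈ S then 1 else 0 with hind
      set χ : Matrix (Fin n) (Fin n) ℂ := U * Matrix.diagonal ind * star U with hχ
      have hχpsd : χ.PosSemidef := by
        have hdpsd : (Matrix.diagonal ind).PosSemidef :=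
          Matrix.posSemidef_diagonal_iff.mpr fun j => by
            by_cases h : j ∈ S <;> simp [hind, h]
        have := hdpsd.mul_mul_conjTranspose_same U
        rwa [← Matrix.star_eq_conjTranspose] at this
      have h1χ : ((1 : Matrix (Fin n) (Fin n) ℂ) - χ).PosSemidef := by
        have hdpsd : (Matrix.diagonal (fun j => 1 - ind j)).PosSemidef :=
          Matrix.posSemidef_diagonal_iff.mpr fun j => by
            by_cases h : j ∈ S <;> simp [hind, h]
        have heq : U * Matrix.diagonal (fun j => 1 - ind j) * star U = 1 - χ := by
          have : Matrix.diagonal (fun j => 1 - ind j)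
              = 1 - Matrix.diagonal ind := by
            rw [← Matrix.diagonal_one, ← Matrix.diagonal_sub]
          rw [this, Matrix.mul_sub, Matrix.sub_mul, Matrix.mul_one, hU2, hχ]
        have := hdpsd.mul_mul_conjTranspose_same U
        rw [← Matrix.star_eq_conjTranspose] at this
        rwa [heq] at this
      have htrχ : χ.trace = (S.card : ℂ) := by
        rw [hχ, Matrix.trace_mul_cycle, hU1, Matrix.one_mul, Matrix.trace_diagonal]
        simp [hind]
      -- the operator P
      set P : Matrix (Fin n) (Fin n) ℂ := Matrix.hadamard Bᵀ χ with hP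
      have hPpsd : P.PosSemidef := hadamard_posSemidef hB.transpose hχpsd
      have h1P : ((1 : Matrix (Fin n) (Fin n) ℂ) - P).PosSemidef := by
        have heq : Matrix.hadamard Bᵀ (1 - χ) = 1 - P := by
          ext i j
          by_cases h : i = j
          · subst h
            simp [hP, Matrix.hadamard_apply, Matrix.one_apply, Matrix.sub_apply,
              Matrix.transpose_apply, hdiag i]
          · simp [hP, Matrix.hadamard_apply, Matrix.one_apply, Matrix.sub_apply,
              Matrix.transpose_apply, h]
        rw [← heq]
        exact hadamard_posSemidef hB.transpose h1χ
      have htrP : P.trace = (k : ℂ) := by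
        have hdiagP : ∀ i, P.diag i = χ.diag i := by
          intro i
          show P i i = χ i i
          rw [hP, Matrix.hadamard_apply, Matrix.transpose_apply, hdiag i, one_mul]
        rw [Matrix.trace, Finset.sum_congr rfl fun i _ => hdiagP i, ← Matrix.trace, htrχ, hS]
      -- trace identity
      have hident : ((Matrix.hadamard B H) * χ).trace = (H * P).trace := by
        simp only [Matrix.trace, Matrix.diag]
        refine Finset.sum_congr rfl fun i _ => ?_
        simp only [Matrix.mul_apply, Matrix.hadamard_apply, hP,
          Matrix.transpose_apply]
        refine Finset.sum_congr rfl fun j _ => ?_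
        ring
      -- eigenvalue sum over S
      have hsumS : ((Matrix.hadamard B H) * χ).trace = ∑ j ∈ S, (hBH.eigenvalues j : ℂ) := by
        have hform : (Matrix.hadamard B H) * χ
            = U * (Matrix.diagonal (RCLike.ofReal ∘ hBH.eigenvalues)
                * Matrix.diagonal ind) * star U := by
          have hUU' : ∀ X : Matrix (Fin n) (Fin n) ℂ, star U * (U * X) = X := fun X => by
            rw [← Matrix.mul_assoc, hU1, Matrix.one_mul]
          conv_lhs => rw [hBH.spectral_theorem, hχ]
          simp only [Unitary.conjStarAlgAut_apply, Unitary.coe_star, ← hU, Matrix.mul_assoc, hUU, hUU']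
        rw [hform, Matrix.trace_mul_cycle, hU1, Matrix.one_mul,
          Matrix.diagonal_mul_diagonal, Matrix.trace_diagonal]
        simp only [Pi.mul_apply, Function.comp_apply, hind]
        simp only [mul_ite, mul_one, mul_zero]
        rw [Finset.sum_ite_mem, Finset.univ_inter]
        rfl
      -- conclude
      have hre : (∑ j ∈ S, (hBH.eigenvalues j : ℂ)).re = ∑ j ∈ S, hBH.eigenvalues j := by
        rw [Complex.re_sum]; norm_num
      have := kyFan hk hH P hPpsd h1P htrP
      have hfin : ∑ j ∈ S, hBH.eigenvalues j = ((H * P).trace).re := by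
        rw [← hre, ← hident, hsumS]
      rw [hfin]
      exact this
    · have hempty : ∀ u : Fin n → ℝ,
          {t : ℝ | ∃ s : Finset (Fin n), s.card = k ∧ t = ∑ i ∈ s, u i} = ∅ := by
        intro u
        ext t
        simp only [Set.mem_setOf_eq, Set.mem_empty_iff_false, iff_false, not_exists]
        rintro s ⟨hs, -⟩
        have := Finset.card_le_univ s
        rw [hs, Fintype.card_fin] at this
        omega
      rw [topSum, topSum, hempty, hempty, Real.sSup_empty]
  · have h1 : (Matrix.hadamard B H).trace = H.trace := by
      rw [Matrix.trace, Matrix.trace]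
      refine Finset.sum_congr rfl fun i _ => ?_
      simp [Matrix.diag, Matrix.hadamard_apply, hdiag i]
    have h2 := (trace_eq_sum_eigenvalues hBH).symm.trans (h1.trans (trace_eq_sum_eigenvalues hH))
    exact_mod_cast h2
end

section
/- Let π = xx† be a pure separable state on ℂ^{d₁}⊗⋯⊗ℂ^{d_m}, x = x¹⊗⋯⊗x^m with unit vectors xᵖ, and d = d₁⋯d_m. Then Λ := (I − π)/(d − 1) is a separable state, i.e., a convex combination of pure product states. -/
open Matrix

/-- Completeness relation for an orthonormal basis of `EuclideanSpace`. -/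
lemma onb_complete {n : ℕ} (b : OrthonormalBasis (Fin n) ℂ (EuclideanSpace ℂ (Fin n)))
    (i j : Fin n) :
    (∑ k, b k i * star (b k j)) = if i = j then 1 else 0 := by
  classical
  set B : Matrix (Fin n) (Fin n) ℂ := Matrix.of fun k i => b k i with hB
  have h1 : B * Bᴴ = 1 := by
    ext k l
    have h := (orthonormal_iff_ite (𝕜 := ℂ)).mp b.orthonormal l k
    simp only [PiLp.inner_apply, RCLike.inner_apply] at h
    simp only [Matrix.mul_apply, Matrix.conjTranspose_apply, Matrix.one_apply, hB,
      Matrix.of_apply]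
    calc ∑ i, b k i * star (b l i) = ∑ i, (starRingEnd ℂ) (b l i) * b k i := by
          simp [mul_comm, RCLike.star_def]
      _ = if l = k then 1 else 0 := by
          rw [← h]; exact Finset.sum_congr rfl fun i _ => mul_comm _ _
      _ = if k = l then 1 else 0 := by simp [eq_comm]
  have h2 : Bᴴ * B = 1 := mul_eq_one_comm.mp h1
  have h3 := congrFun (congrFun h2 j) i
  simp only [Matrix.mul_apply, Matrix.conjTranspose_apply, Matrix.one_apply, hB,
    Matrix.of_apply] at h3
  calc ∑ k, b k i * star (b k j) = ∑ k, star (Matrix.of (fun k i => (b k : Fin n → ℂ) i) k j) * Matrix.of (fun k i => (b k : Fin n → ℂ) i) k i := by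
        simp [mul_comm]
    _ = if j = i then 1 else 0 := h3
    _ = if i = j then 1 else 0 := by simp [eq_comm]

/-- For a pure product state `π = xx†` on `ℂ^{d₁} ⊗ ⋯ ⊗ ℂ^{d_m}` (with each `xᵖ` a unit
vector) and `d = d₁⋯d_m ≥ 2`, the state `(I - π)/(d-1)` is separable: it is a convex
combination of pure product states. -/
theorem sub_proj_div_separable {m : ℕ} (d : Fin m → ℕ) [∀ p, NeZero (d p)]
    (hd : 2 ≤ ∏ p, d p)
    (x : ∀ p, Fin (d p) → ℂ) (hx : ∀ p, ∑ k, ‖x p k‖ ^ 2 = 1) :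
    ∃ (N : ℕ) (c : Fin N → ℝ) (v : Fin N → ∀ p, Fin (d p) → ℂ),
      (∀ j, 0 ≤ c j) ∧ (∑ j, c j = 1) ∧ (∀ j p, ∑ k, ‖v j p k‖ ^ 2 = 1) ∧
      (((∏ p, d p : ℕ) : ℂ) - 1)⁻¹ •
          ((1 : Matrix (∀ p, Fin (d p)) (∀ p, Fin (d p)) ℂ) -
            Matrix.of fun f g => (∏ p, x p (f p)) * star (∏ p, x p (g p))) =
        ∑ j, (c j : ℂ) •
          Matrix.of fun f g => (∏ p, v j p (f p)) * star (∏ p, v j p (g p)) := by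
  classical
  -- extend each x p to an orthonormal basis with `b p 0 = x p`
  have hbex : ∀ p, ∃ b : OrthonormalBasis (Fin (d p)) ℂ (EuclideanSpace ℂ (Fin (d p))),
      ∀ k, b 0 k = x p k := by
    intro p
    set y : EuclideanSpace ℂ (Fin (d p)) := (WithLp.equiv 2 _).symm (x p) with hy
    have hcard : Module.finrank ℂ (EuclideanSpace ℂ (Fin (d p))) = Fintype.card (Fin (d p)) := by
      simp
    have hyy : (inner ℂ y y : ℂ) = 1 := by
      simp only [PiLp.inner_apply, RCLike.inner_apply]
      have : ∀ k, y k * (starRingEnd ℂ) (y k) = ((‖x p k‖ ^ 2 : ℝ) : ℂ) := by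
        intro k
        rw [show y k = x p k from rfl, RCLike.mul_conj]
        norm_cast
      simp only [this]
      rw [← Complex.ofReal_sum, hx p, Complex.ofReal_one]
    have horth : Orthonormal ℂ (({0} : Set (Fin (d p))).restrict fun _ => y) := by
      rw [orthonormal_iff_ite]
      rintro ⟨i, hi⟩ ⟨j, hj⟩
      simp only [Set.mem_singleton_iff] at hi hj
      subst hi; subst hj
      rw [if_pos rfl]; exact hyy
    obtain ⟨b, hb⟩ := horth.exists_orthonormalBasis_extension_of_card_eq hcard
    exact ⟨b, fun k => by rw [hb 0 rfl]; rfl⟩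
  choose b hb0 using hbex
  set T := (∀ p, Fin (d p)) with hT
  set N := Fintype.card T with hN
  set e := (Fintype.equivFin T).symm with he
  have hcardT : Fintype.card T = ∏ p, d p := by
    simp [hT, Fintype.card_pi]
  set t0 : T := fun p => 0 with ht0
  set a : ℝ := (((∏ p, d p : ℕ) : ℝ) - 1)⁻¹ with ha
  have h2r : (2 : ℝ) ≤ ((∏ p, d p : ℕ) : ℝ) := by exact_mod_cast hd
  have hdne : (((∏ p, d p : ℕ) : ℝ) - 1) ≠ 0 := by linarith
  have hanneg : 0 ≤ a := by
    rw [ha]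
    exact inv_nonneg.mpr (by linarith)
  refine ⟨N, fun j => if e j = t0 then 0 else a, fun j p => b p (e j p), ?_, ?_, ?_, ?_⟩
  · intro j
    dsimp only
    split
    · exact le_refl _
    · exact hanneg
  · calc (∑ j : Fin N, if e j = t0 then (0:ℝ) else a)
        = ∑ t : T, (if t = t0 then (0:ℝ) else a) :=
          Fintype.sum_equiv e _ _ (fun j => rfl)
      _ = (∑ t : T, a) - ∑ t : T, (if t = t0 then a else 0) := by
          rw [← Finset.sum_sub_distrib]
          apply Finset.sum_congr rfl
          intro t _
          split <;> simp
      _ = (Fintype.card T : ℝ) * a - a := by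
          rw [Finset.sum_const, Finset.sum_ite_eq' Finset.univ t0 (fun _ => a)]
          rw [if_pos (Finset.mem_univ t0), Finset.card_univ, nsmul_eq_mul]
      _ = 1 := by
          rw [hcardT]
          have h5 : ((∏ p, d p : ℕ) : ℝ) * a - a = (((∏ p, d p : ℕ) : ℝ) - 1) * a := by ring
          rw [h5, ha, mul_inv_cancel₀ hdne]
  · intro j p
    dsimp only
    have h1 : ‖b p (e j p)‖ = 1 := (b p).orthonormal.1 _
    rw [EuclideanSpace.norm_eq] at h1
    exact Real.sqrt_eq_one.mp h1
  · ext f g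
    simp only [Matrix.smul_apply, Matrix.sub_apply, Matrix.one_apply, Matrix.of_apply,
      Matrix.sum_apply, smul_eq_mul]
    have key : ∀ t : T, (∏ p, b p (t p) (f p)) * star (∏ p, b p (t p) (g p))
        = ∏ p, (b p (t p) (f p) * star (b p (t p) (g p))) := by
      intro t
      rw [star_prod, Finset.prod_mul_distrib]
    have hsum : (∑ t : T, (∏ p, b p (t p) (f p)) * star (∏ p, b p (t p) (g p)))
        = if f = g then 1 else 0 := by
      simp only [key]
      rw [← Fintype.prod_sum (fun p k => b p k (f p) * star (b p k (g p)))]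
      have : ∀ p, (∑ k, b p k (f p) * star (b p k (g p))) = if f p = g p then 1 else 0 :=
        fun p => onb_complete (b p) (f p) (g p)
      simp only [this]
      by_cases hfg : f = g
      · subst hfg; simp
      · rw [if_neg hfg]
        obtain ⟨p, hp⟩ := Function.ne_iff.mp hfg
        exact Finset.prod_eq_zero (Finset.mem_univ p) (if_neg hp)
    have ht0v : (∏ p, b p (t0 p) (f p)) * star (∏ p, b p (t0 p) (g p))
        = (∏ p, x p (f p)) * star (∏ p, x p (g p)) := by
      simp only [ht0, hb0]
    calc ((((∏ p, d p : ℕ) : ℂ)) - 1)⁻¹ *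
          ((if f = g then 1 else 0) - (∏ p, x p (f p)) * star (∏ p, x p (g p)))
        = ∑ t : T, (if t = t0 then (0:ℂ) else (a:ℂ)) *
            ((∏ p, b p (t p) (f p)) * star (∏ p, b p (t p) (g p))) := by
          have hsplit : ∀ t : T, (if t = t0 then (0:ℂ) else (a:ℂ)) *
              ((∏ p, b p (t p) (f p)) * star (∏ p, b p (t p) (g p)))
              = (a:ℂ) * ((∏ p, b p (t p) (f p)) * star (∏ p, b p (t p) (g p)))
                - (if t = t0 then (a:ℂ) * ((∏ p, b p (t p) (f p)) * star (∏ p, b p (t p) (g p))) else 0) := by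
            intro t; split <;> ring
          simp only [hsplit]
          rw [Finset.sum_sub_distrib, ← Finset.mul_sum, hsum,
            Finset.sum_ite_eq' Finset.univ t0, if_pos (Finset.mem_univ t0), ht0v]
          have hacast : (a : ℂ) = ((((∏ p, d p : ℕ) : ℂ)) - 1)⁻¹ := by
            rw [ha]; push_cast; ring
          rw [hacast]; ring
      _ = ∑ j : Fin N, (if e j = t0 then (0:ℂ) else (a:ℂ)) *
            ((∏ p, b p (e j p) (f p)) * star (∏ p, b p (e j p) (g p))) :=
          (Fintype.sum_equiv e _ _ (fun j => rfl)).symm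
      _ = ∑ j : Fin N, (((if e j = t0 then (0:ℝ) else a) : ℝ) : ℂ) *
            ((∏ p, b p (e j p) (f p)) * star (∏ p, b p (e j p) (g p))) := by
          apply Finset.sum_congr rfl
          intro j _
          congr 1
          split <;> simp
end
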